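/- arXiv:2404.19332 — 4 statements merged into one kernel-verified Lean document; each statement's English description precedes it below -/
import Mathlib

section
/- For every natural number n ≥ 2, φ(n)³ + ψ(n)³ + σ(n)³ ≥ 3n³ + 3n² + 9n + 1. -/
/-!
Write `a = φ(n)`. Since `ψ(n) > n` and `σ(n) ≥ 2n - a` (compare `σ(n) - n = ∑_{d ∣ n, d < n} d`
with `n - φ(n) = ∑_{d ∣ n, d < n} φ(d)`), the left side is at least
`a³ + (2n - a)³ + (n + 1)³`. The identity `a³ + (2n - a)³ = 2n³ + 6n(n - a)²` together with
`a < n` bounds the first two cubes below by `2n³ + 6n`, and `2n³ + 6n + (n + 1)³` is the right side.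
-/

/-- The Dedekind psi function: ψ(p^a) = p^(a-1)(p+1), ψ(1) = 1, multiplicative. -/
def dpsi (n : ℕ) : ℕ := ∏ p ∈ n.primeFactors, p ^ (n.factorization p - 1) * (p + 1)

/-- Sum of divisors function. -/
def sigma1 (n : ℕ) : ℕ := ArithmeticFunction.sigma 1 n

open Finset

lemma lt_dpsi {n : ℕ} (hn : 1 < n) : n < dpsi n := by
  conv_lhs => rw [Nat.prod_primeFactors_pow_factorization (by omega : n ≠ 0)]
  refine prod_lt_prod_of_nonempty (fun p hp => pow_pos (Nat.pos_of_mem_primeFactors hp) _)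
    (fun p hp => ?_) (Nat.nonempty_primeFactors.mpr hn)
  have hk : n.factorization p ≠ 0 := Finsupp.mem_support_iff.mp (Nat.support_factorization n ▸ hp)
  calc p ^ n.factorization p = p ^ (n.factorization p - 1) * p := (pow_sub_one_mul hk p).symm
    _ < p ^ (n.factorization p - 1) * (p + 1) :=
      Nat.mul_lt_mul_of_pos_left (Nat.lt_succ_self p) (pow_pos (Nat.pos_of_mem_primeFactors hp) _)

lemma two_mul_le_totient_add_sigma1 (n : ℕ) : 2 * n ≤ n.totient + sigma1 n := by
  rcases eq_or_ne n 0 with rfl | hn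
  · simp
  have htot : ∑ d ∈ n.properDivisors, d.totient + n.totient = n := by
    rw [add_comm, ← sum_insert Nat.self_notMem_properDivisors, Nat.insert_self_properDivisors hn,
      Nat.sum_totient]
  have hle : ∑ d ∈ n.properDivisors, d.totient ≤ ∑ d ∈ n.properDivisors, d :=
    sum_le_sum fun d _ => Nat.totient_le d
  have hsig : sigma1 n = ∑ d ∈ n.properDivisors, d + n := by
    rw [sigma1, ArithmeticFunction.sigma_one_apply, Nat.sum_divisors_eq_sum_properDivisors_add_self]
  omega

lemma two_mul_cube_add_le_cube_add_cube (a m : ℕ) (h : a < m) :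
    2 * m ^ 3 + 6 * m ≤ a ^ 3 + (2 * m - a) ^ 3 := by
  zify [show a ≤ 2 * m by omega]
  have hid : (a : ℤ) ^ 3 + (2 * m - a) ^ 3 = 2 * m ^ 3 + 6 * m * (m - a) ^ 2 := by ring
  have hgap : (1 : ℤ) ≤ (m - a) ^ 2 := one_le_pow₀ (by omega)
  nlinarith

theorem stmt0 (n : ℕ) (hn : 2 ≤ n) :
    n.totient ^ 3 + dpsi n ^ 3 + sigma1 n ^ 3 ≥ 3 * n ^ 3 + 3 * n ^ 2 + 9 * n + 1 := by
  have htot : n.totient < n := Nat.totient_lt n hn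
  have hsig : 2 * n - n.totient ≤ sigma1 n := by
    have := two_mul_le_totient_add_sigma1 n
    omega
  calc 3 * n ^ 3 + 3 * n ^ 2 + 9 * n + 1 = (2 * n ^ 3 + 6 * n) + (n + 1) ^ 3 := by ring
    _ ≤ (n.totient ^ 3 + (2 * n - n.totient) ^ 3) + dpsi n ^ 3 := by
      gcongr ?_ + ?_
      · exact two_mul_cube_add_le_cube_add_cube _ _ htot
      · exact Nat.pow_le_pow_left (lt_dpsi hn) 3
    _ ≤ n.totient ^ 3 + dpsi n ^ 3 + sigma1 n ^ 3 := by
      have := Nat.pow_le_pow_left hsig 3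
      omega
end

section
/- For every natural number n ≥ 2, φ(n)²ψ(n)² + φ(n)²σ(n)² + σ(n)²ψ(n)² ≥ 3n⁴ + 4n³ + 2n² + 4n + 3. -/
namespace Finset

variable {ι R : Type*} [CommSemiring R] [LinearOrder R] [IsStrictOrderedRing R] [ExistsAddOfLE R]

theorem two_mul_prod_le_prod_add_prod {s : Finset ι} {f g h : ι → R}
    (hf : ∀ i ∈ s, 0 ≤ f i) (hh : ∀ i ∈ s, 0 ≤ h i) (hfg : ∀ i ∈ s, f i ≤ g i)
    (hfgh : ∀ i ∈ s, 2 * h i ≤ f i + g i) :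
    2 * ∏ i ∈ s, h i ≤ ∏ i ∈ s, f i + ∏ i ∈ s, g i := by
  induction s using Finset.cons_induction with
  | empty => simp [one_add_one_eq_two]
  | cons j s hj ih =>
    simp only [mem_cons, forall_eq_or_imp] at hf hh hfg hfgh
    simp only [prod_cons]
    have hH : 0 ≤ ∏ i ∈ s, h i := prod_nonneg hh.2
    have hFG : ∏ i ∈ s, f i ≤ ∏ i ∈ s, g i := prod_le_prod hf.2 hfg.2
    refine le_of_mul_le_mul_left ?_ (zero_lt_two (α := R))
    calc 2 * (2 * (h j * ∏ i ∈ s, h i)) = (2 * h j) * (2 * ∏ i ∈ s, h i) := by ring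
      _ ≤ (f j + g j) * (∏ i ∈ s, f i + ∏ i ∈ s, g i) :=
        mul_le_mul hfgh.1 (ih hf.2 hh.2 hfg.2 hfgh.2) (mul_nonneg zero_le_two hH)
          (add_nonneg hf.1 (hf.1.trans hfg.1))
      _ ≤ 2 * (f j * ∏ i ∈ s, f i + g j * ∏ i ∈ s, g i) := by
        linear_combination mul_add_mul_le_mul_add_mul hfg.1 hFG

end Finset

open Finset

lemma pow_pred_factorization_mul {n p : ℕ} (hp : p ∈ n.primeFactors) :
    p ^ (n.factorization p - 1) * p = p ^ n.factorization p := by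
  rw [← pow_succ, Nat.sub_add_cancel (Nat.one_le_iff_ne_zero.mpr (Finsupp.mem_support_iff.mp hp))]

lemma two_mul_le_totient_add_dpsi (n : ℕ) : 2 * n ≤ n.totient + dpsi n := by
  rcases eq_or_ne n 0 with rfl | hn
  · simp
  rw [Nat.totient_eq_prod_factorization hn, Nat.prod_factorization_eq_prod_primeFactors, dpsi]
  conv_lhs => rw [Nat.prod_primeFactors_pow_factorization hn]
  refine two_mul_prod_le_prod_add_prod (fun _ _ => Nat.zero_le _) (fun _ _ => Nat.zero_le _)
    (fun p _ => Nat.mul_le_mul_left _ (by omega)) fun p hp => ?_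
  have hp1 : 1 ≤ p := (Nat.prime_of_mem_primeFactors hp).one_le
  rw [← mul_add, show p - 1 + (p + 1) = 2 * p by omega, ← pow_pred_factorization_mul hp,
    mul_left_comm]

lemma dpsi_le_sigma1 {n : ℕ} (hn : n ≠ 0) : dpsi n ≤ sigma1 n := by
  rw [sigma1, ArithmeticFunction.sigma_one_apply, Nat.sum_divisors hn, dpsi]
  refine prod_le_prod' fun p hp => ?_
  set a := n.factorization p
  have ha : a ≠ 0 := Finsupp.mem_support_iff.mp hp
  calc p ^ (a - 1) * (p + 1) = ∑ i ∈ {a - 1, a}, p ^ i := by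
        rw [sum_pair (by omega), ← pow_pred_factorization_mul hp]; ring
    _ ≤ ∑ i ∈ range (a + 1), p ^ i :=
        sum_le_sum_of_subset (by intro i; simp only [mem_insert, mem_singleton, mem_range]; omega)

lemma quartic_le_of_one_le (n : ℕ) {t : ℕ} (ht : 1 ≤ t) :
    3 * n ^ 4 + 4 * n ^ 3 + 2 * n ^ 2 + 4 * n + 3 ≤
      3 * n ^ 4 + 4 * n ^ 3 * t + 2 * n ^ 2 * t ^ 2 + 4 * n * t ^ 3 + 3 * t ^ 4 :=
  calc 3 * n ^ 4 + 4 * n ^ 3 + 2 * n ^ 2 + 4 * n + 3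
      = 3 * n ^ 4 + 4 * n ^ 3 * 1 + 2 * n ^ 2 * 1 ^ 2 + 4 * n * 1 ^ 3 + 3 * 1 ^ 4 := by ring
    _ ≤ _ := by gcongr

lemma quartic_le_of_two_mul_le_add {n x y s : ℕ} (hn : 1 ≤ n) (hxy : 2 * n ≤ x + y) (hy : n < y)
    (hys : y ≤ s) :
    3 * n ^ 4 + 4 * n ^ 3 + 2 * n ^ 2 + 4 * n + 3 ≤
      x ^ 2 * y ^ 2 + x ^ 2 * s ^ 2 + s ^ 2 * y ^ 2 := by
  have hsy : 2 * (x * y) ^ 2 + y ^ 4 ≤ x ^ 2 * y ^ 2 + x ^ 2 * s ^ 2 + s ^ 2 * y ^ 2 :=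
    calc 2 * (x * y) ^ 2 + y ^ 4 = x ^ 2 * y ^ 2 + x ^ 2 * y ^ 2 + y ^ 2 * y ^ 2 := by ring
      _ ≤ _ := by gcongr
  refine le_trans ?_ hsy
  rcases le_or_gt y (2 * n) with hle | hlt
  · obtain ⟨t, rfl⟩ := Nat.exists_eq_add_of_le hy.le
    obtain ⟨u, rfl⟩ := Nat.exists_eq_add_of_le' (show t ≤ n by omega)
    calc _ ≤ 3 * (u + t) ^ 4 + 4 * (u + t) ^ 3 * t + 2 * (u + t) ^ 2 * t ^ 2 +
          4 * (u + t) * t ^ 3 + 3 * t ^ 4 := quartic_le_of_one_le _ (by omega)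
      _ = 2 * (u * (u + t + t)) ^ 2 + (u + t + t) ^ 4 := by ring
      _ ≤ _ := by gcongr; omega
  · have h16 : (2 * n) ^ 4 ≤ y ^ 4 := Nat.pow_le_pow_left hlt.le 4
    have h3 : n ^ 3 ≤ n ^ 4 := Nat.pow_le_pow_right hn (by norm_num)
    have h2 : n ^ 2 ≤ n ^ 4 := Nat.pow_le_pow_right hn (by norm_num)
    have h1 : n ≤ n ^ 4 := Nat.le_self_pow (by norm_num) n
    have h0 : 1 ≤ n ^ 4 := Nat.one_le_pow _ _ hn
    nlinarith

theorem stmt2 (n : ℕ) (hn : 2 ≤ n) :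
    n.totient ^ 2 * dpsi n ^ 2 + n.totient ^ 2 * sigma1 n ^ 2 + sigma1 n ^ 2 * dpsi n ^ 2 ≥
      3 * n ^ 4 + 4 * n ^ 3 + 2 * n ^ 2 + 4 * n + 3 :=
  quartic_le_of_two_mul_le_add (by omega) (two_mul_le_totient_add_dpsi n) (lt_dpsi hn)
    (dpsi_le_sigma1 (by omega))
end

section
/- For distinct primes p and q, 2(p²−1)²(q²−1)² + (p+1)⁴(q+1)⁴ > 3p⁴q⁴ + 4p³q³ + 2p²q² + 4pq + 3. -/
theorem quartic_lt_of_nonneg_of_one_le {R : Type*} [CommRing R] [LinearOrder R]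
    [IsStrictOrderedRing R] {m b : R} (hm : 0 ≤ m) (hb : 1 ≤ b) :
    3 * m ^ 4 + 4 * m ^ 3 + 2 * m ^ 2 + 4 * m + 3 <
      3 * (m + 1) ^ 4 + 4 * (m + 1) ^ 3 * b + 2 * (m + 1) ^ 2 * b ^ 2 + 4 * (m + 1) * b ^ 3
        + 3 * b ^ 4 := by
  have hm1 : m < m + 1 := lt_add_one m
  have h4 : m ^ 4 < (m + 1) ^ 4 := by gcongr
  have h3 : m ^ 3 ≤ (m + 1) ^ 3 * b :=
    calc m ^ 3 ≤ (m + 1) ^ 3 * 1 := by rw [mul_one]; gcongr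
      _ ≤ (m + 1) ^ 3 * b := by gcongr
  have h2 : m ^ 2 ≤ (m + 1) ^ 2 * b ^ 2 :=
    calc m ^ 2 ≤ (m + 1) ^ 2 * 1 ^ 2 := by rw [one_pow, mul_one]; gcongr
      _ ≤ (m + 1) ^ 2 * b ^ 2 := by gcongr
  have h1 : m ≤ (m + 1) * b ^ 3 :=
    calc m ≤ (m + 1) * 1 ^ 3 := by rw [one_pow, mul_one]; exact hm1.le
      _ ≤ (m + 1) * b ^ 3 := by gcongr
  have h0 : 1 ≤ b ^ 4 := one_le_pow₀ hb
  linarith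

theorem stmt15_general (p q : ℕ) (hp : p.Prime) (hq : q.Prime) :
    2 * ((p ^ 2 - 1) ^ 2 * (q ^ 2 - 1) ^ 2) + (p + 1) ^ 4 * (q + 1) ^ 4 >
      3 * (p ^ 4 * q ^ 4) + 4 * (p ^ 3 * q ^ 3) + 2 * (p ^ 2 * q ^ 2) + 4 * (p * q) + 3 := by
  zify [Nat.one_le_pow 2 p hp.pos, Nat.one_le_pow 2 q hq.pos]
  have hsum : (1 : ℤ) ≤ p + q := by exact_mod_cast hp.pos.trans_le (Nat.le_add_right p q)
  linear_combination quartic_lt_of_nonneg_of_one_le (R := ℤ) (m := p * q) (by positivity) hsum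

theorem stmt15 (p q : ℕ) (hp : p.Prime) (hq : q.Prime) (hpq : p ≠ q) :
    2 * ((p ^ 2 - 1) ^ 2 * (q ^ 2 - 1) ^ 2) + (p + 1) ^ 4 * (q + 1) ^ 4 >
      3 * (p ^ 4 * q ^ 4) + 4 * (p ^ 3 * q ^ 3) + 2 * (p ^ 2 * q ^ 2) + 4 * (p * q) + 3 :=
  stmt15_general p q hp hq
end

section
/- For every natural number n ≥ 2, φ(n)ψ(n)σ(n) ≥ n³ + n² − n − 1. -/
theorem dpsi_eq_factorization_prod (n : ℕ) :
    dpsi n = n.factorization.prod fun p k => p ^ (k - 1) * (p + 1) := by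
  rw [Finsupp.prod, Nat.support_factorization]
  rfl

theorem dpsi_mul {m n : ℕ} (h : m.Coprime n) : dpsi (m * n) = dpsi m * dpsi n := by
  simp only [dpsi_eq_factorization_prod, Nat.factorization_mul_of_coprime h]
  exact Finsupp.prod_add_index_of_disjoint h.disjoint_primeFactors _

theorem dpsi_prime_pow {p a : ℕ} (hp : p.Prime) (ha : a ≠ 0) :
    dpsi (p ^ a) = p ^ (a - 1) * (p + 1) := by
  rw [dpsi, Nat.primeFactors_prime_pow ha hp, Finset.prod_singleton, hp.factorization_pow,
    Finsupp.single_eq_same]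

theorem sigma1_mul {m n : ℕ} (h : m.Coprime n) : sigma1 (m * n) = sigma1 m * sigma1 n :=
  ArithmeticFunction.isMultiplicative_sigma.map_mul_of_coprime h

theorem sigma1_prime_pow_mul_sub_one_add_one {p : ℕ} (hp : p.Prime) (a : ℕ) :
    sigma1 (p ^ a) * (p - 1) + 1 = p ^ (a + 1) := by
  have h := geom_sum_mul_add (p - 1) (a + 1)
  rw [Nat.sub_add_cancel hp.one_le] at h
  rwa [sigma1, ArithmeticFunction.sigma_one_apply_prime_pow hp]

theorem totient_mul_dpsi_mul_sigma1_mul {m n : ℕ} (h : m.Coprime n) :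
    (m * n).totient * dpsi (m * n) * sigma1 (m * n) =
      (m.totient * dpsi m * sigma1 m) * (n.totient * dpsi n * sigma1 n) := by
  rw [Nat.totient_mul h, dpsi_mul h, sigma1_mul h]
  ring

/- Substituting `a = x + 2`, `b = y + 2`, the difference of the two sides is a polynomial in
`x, y` with nonnegative coefficients; the same holds below with `p = x + 2`, `r = y + 1`. -/
theorem add_one_sq_mul_sub_one_mul_le {a b : ℕ} (ha : 2 ≤ a) (hb : 2 ≤ b) :
    (a * b + 1) ^ 2 * (a * b - 1) ≤ (a + 1) ^ 2 * (a - 1) * ((b + 1) ^ 2 * (b - 1)) := by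
  obtain ⟨x, rfl⟩ := Nat.exists_eq_add_of_le' ha
  obtain ⟨y, rfl⟩ := Nat.exists_eq_add_of_le' hb
  have hab : 1 ≤ (x + 2) * (y + 2) := by nlinarith
  zify [hab, ha.trans' one_le_two, hb.trans' one_le_two]
  rw [← sub_nonneg]
  ring_nf
  positivity

theorem mul_add_one_sq_mul_sub_one_le {p r : ℕ} (hp : 2 ≤ p) (hr : 1 ≤ r) :
    (p * r + 1) ^ 2 * (p * r - 1) ≤ r * (p + 1) * (r * (p ^ 2 * r - 1)) := by
  obtain ⟨x, rfl⟩ := Nat.exists_eq_add_of_le' hp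
  obtain ⟨y, rfl⟩ := Nat.exists_eq_add_of_le' hr
  have h₁ : 1 ≤ (x + 2) * (y + 1) := by nlinarith
  have h₂ : 1 ≤ (x + 2) ^ 2 * (y + 1) := by nlinarith
  zify [h₁, h₂]
  rw [← sub_nonneg]
  ring_nf
  positivity

theorem le_totient_mul_dpsi_mul_sigma1_prime_pow {p a : ℕ} (hp : p.Prime) (ha : a ≠ 0) :
    (p ^ a + 1) ^ 2 * (p ^ a - 1) ≤ (p ^ a).totient * dpsi (p ^ a) * sigma1 (p ^ a) := by
  obtain ⟨k, rfl⟩ : ∃ k, a = k + 1 := ⟨a - 1, by omega⟩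
  have hσ : p ^ 2 * p ^ k - 1 = sigma1 (p ^ (k + 1)) * (p - 1) := by
    rw [Nat.eq_sub_of_add_eq (sigma1_prime_pow_mul_sub_one_add_one hp (k + 1))]
    ring_nf
  rw [Nat.totient_prime_pow_succ hp, dpsi_prime_pow hp ha, Nat.add_sub_cancel]
  calc (p ^ (k + 1) + 1) ^ 2 * (p ^ (k + 1) - 1)
      = (p * p ^ k + 1) ^ 2 * (p * p ^ k - 1) := by rw [pow_succ' p k]
    _ ≤ p ^ k * (p + 1) * (p ^ k * (p ^ 2 * p ^ k - 1)) :=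
      mul_add_one_sq_mul_sub_one_le hp.two_le (Nat.one_le_pow _ _ hp.pos)
    _ = p ^ k * (p - 1) * (p ^ k * (p + 1)) * sigma1 (p ^ (k + 1)) := by rw [hσ]; ring

theorem le_totient_mul_dpsi_mul_sigma1 {n : ℕ} (hn : 2 ≤ n) :
    (n + 1) ^ 2 * (n - 1) ≤ n.totient * dpsi n * sigma1 n := by
  induction n using Nat.recOnPosPrimePosCoprime with
  | zero | one => omega
  | prime_pow p a hp ha => exact le_totient_mul_dpsi_mul_sigma1_prime_pow hp ha.ne'
  | coprime a b ha hb hab iha ihb =>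
    rw [totient_mul_dpsi_mul_sigma1_mul hab]
    exact (add_one_sq_mul_sub_one_mul_le ha hb).trans (Nat.mul_le_mul (iha ha) (ihb hb))

theorem stmt18 (n : ℕ) (hn : 2 ≤ n) :
    n.totient * dpsi n * sigma1 n ≥ n ^ 3 + n ^ 2 - n - 1 := by
  obtain ⟨m, rfl⟩ := Nat.exists_eq_add_of_le' (hn.trans' one_le_two)
  have hcubic : (m + 1) ^ 3 + (m + 1) ^ 2 - (m + 1) - 1 = (m + 1 + 1) ^ 2 * (m + 1 - 1) := by
    rw [Nat.sub_sub, Nat.add_sub_cancel]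
    exact Nat.sub_eq_of_eq_add (by ring)
  rw [ge_iff_le, hcubic]
  exact le_totient_mul_dpsi_mul_sigma1 hn
end
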